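/- The operation f : A^{m^{2^n}+1} → A is a near-unanimity operation: for all x, y ∈ A, f applied to any tuple all of whose coordinates equal x except at most one coordinate equal to y returns x. -/

import Mathlib

/- Let `x` be the common value of all coordinates but one. Then `L_r ≤ 1` for `r < x` and
`L_r ≥ m^(2^n)` for `r ≥ x`. Since every weight `m^(2^r)` is at least `2`, no `r ≥ x` lies in `F`:
`m^(2^r) L_r ≥ 2 m^(2^n)` exceeds the arity `m^(2^n) + 1`. If `x = a` this makes `F` empty. If `x = i`
then `i ∈ F`, because `m^(2^i) L_i ≤ m^(2^i)` while `L_{i+1}` is at least `m^(2^n) > m^(2^i)`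
(for `i < n`) or equals the arity (for `i = n`); so `max F = i`. -/

/- The universe `A = {a, 0, 1, ..., n}` of size `n+2` is encoded as `Fin (n+2)`,
where `a` is encoded as `0` and the element `i ∈ {0, ..., n}` is encoded as `i+1`. -/

/-- `L_r(x)`: the number of coordinates of `x` whose value is strictly less than
the element `r` in the order `a < 0 < 1 < ⋯ < n` (encoded: value `< r + 1`);
for `r = n+1` this counts all coordinates. -/
def Lcnt (n : ℕ) {K : ℕ} (x : Fin K → Fin (n + 2)) (r : ℕ) : ℕ :=
  (Finset.univ.filter (fun q => (x q).val < r + 1)).card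

/-- `F_x = {r ∈ {0, …, n} : L_{r+1}(x) > m^(2^r) · L_r(x)}`. -/
def FsetA (n m : ℕ) {K : ℕ} (x : Fin K → Fin (n + 2)) : Finset ℕ :=
  (Finset.range (n + 1)).filter (fun r => m ^ 2 ^ r * Lcnt n x r < Lcnt n x (r + 1))

/-- The operation `f : A^(m^(2^n)+1) → A`: `f(x) = max F_x` if `F_x ≠ ∅` (the
element `max F_x`, encoded as `max F_x + 1`), and `f(x) = a` otherwise. -/
def fop (n m : ℕ) (x : Fin (m ^ 2 ^ n + 1) → Fin (n + 2)) : Fin (n + 2) :=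
  if h : (FsetA n m x).Nonempty then
    ⟨(FsetA n m x).max' h + 1, by
      have hmem := (FsetA n m x).max'_mem h
      have h2 : (FsetA n m x).max' h < n + 1 :=
        Finset.mem_range.mp (Finset.mem_filter.mp hmem).1
      omega⟩
  else 0

section NearUnanimous

variable {n K : ℕ} {x : Fin (n + 2)} {j : Fin K} {w : Fin K → Fin (n + 2)}

theorem Lcnt_le_card (w : Fin K → Fin (n + 2)) (r : ℕ) : Lcnt n w r ≤ K :=
  (Finset.card_filter_le _ _).trans_eq (Finset.card_fin K)

theorem Lcnt_add_one_eq_card (w : Fin K → Fin (n + 2)) : Lcnt n w (n + 1) = K := by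
  rw [Lcnt, Finset.filter_true_of_mem fun q _ => (w q).isLt, Finset.card_univ, Fintype.card_fin]

theorem Lcnt_le_one_of_lt (hw : ∀ q, q ≠ j → w q = x) {r : ℕ} (hr : r < x) :
    Lcnt n w r ≤ 1 := by
  have hsub : Finset.univ.filter (fun q => (w q).val < r + 1) ⊆ {j} := by
    intro q hq
    rw [Finset.mem_singleton]
    by_contra hqj
    rw [Finset.mem_filter, hw q hqj] at hq
    omega
  simpa [Lcnt] using Finset.card_le_card hsub

theorem card_sub_one_le_Lcnt (hw : ∀ q, q ≠ j → w q = x) {r : ℕ} (hr : x ≤ r) :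
    K - 1 ≤ Lcnt n w r := by
  have hsub : ({j}ᶜ : Finset (Fin K)) ⊆ Finset.univ.filter (fun q => (w q).val < r + 1) := by
    intro q hq
    rw [Finset.mem_compl, Finset.mem_singleton] at hq
    rw [Finset.mem_filter, hw q hq]
    exact ⟨Finset.mem_univ q, Nat.lt_succ_of_le hr⟩
  simpa [Lcnt, Finset.card_compl] using Finset.card_le_card hsub

end NearUnanimous

section FsetA

variable {n m : ℕ} {x : Fin (n + 2)} {j : Fin (m ^ 2 ^ n + 1)} {w : Fin (m ^ 2 ^ n + 1) → Fin (n + 2)}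

theorem lt_of_mem_FsetA (hm : 2 ≤ m) (hw : ∀ q, q ≠ j → w q = x) {r : ℕ}
    (hr : r ∈ FsetA n m w) : r < x := by
  by_contra! hxr
  have hweight : 2 ≤ m ^ 2 ^ r := hm.trans (Nat.le_self_pow (by positivity) m)
  have hlow : m ^ 2 ^ n ≤ Lcnt n w r := by simpa using card_sub_one_le_Lcnt hw hxr
  have hpos : 1 ≤ m ^ 2 ^ n := Nat.one_le_pow _ _ (by omega)
  have hweighted : 2 * m ^ 2 ^ n ≤ m ^ 2 ^ r * Lcnt n w r := Nat.mul_le_mul hweight hlow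
  have hgrow := (Finset.mem_filter.mp hr).2
  have := Lcnt_le_card w (r + 1)
  omega

theorem mem_FsetA_of_succ (hm : 2 ≤ m) {i : Fin (n + 1)} (hw : ∀ q, q ≠ j → w q = i.succ) :
    (i : ℕ) ∈ FsetA n m w := by
  refine Finset.mem_filter.mpr ⟨Finset.mem_range.mpr i.isLt, ?_⟩
  have hsmall : m ^ 2 ^ (i : ℕ) * Lcnt n w i ≤ m ^ 2 ^ (i : ℕ) :=
    mul_le_of_le_one_right (Nat.zero_le _) (Lcnt_le_one_of_lt hw (by simp))
  refine hsmall.trans_lt ?_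
  rcases (Nat.lt_succ_iff.mp i.isLt).lt_or_eq with hin | hin
  · calc m ^ 2 ^ (i : ℕ) < m ^ 2 ^ n := Nat.pow_lt_pow_right hm (Nat.pow_lt_pow_right one_lt_two hin)
      _ ≤ Lcnt n w (i + 1) := by simpa using card_sub_one_le_Lcnt hw (by simp)
  · rw [hin, Lcnt_add_one_eq_card]
    exact Nat.lt_succ_self _

theorem fop_eq_zero (hF : FsetA n m w = ∅) : fop n m w = 0 := by
  rw [fop, dif_neg (by simp [hF])]

theorem fop_val_eq {i : ℕ} (hi : IsGreatest (FsetA n m w : Set ℕ) i) :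
    (fop n m w : ℕ) = i + 1 := by
  have hne : (FsetA n m w).Nonempty := ⟨i, hi.1⟩
  rw [fop, dif_pos hne]
  exact congrArg (· + 1) ((Finset.isGreatest_max' _ hne).unique hi)

end FsetA

theorem stmt9 (n m : ℕ) (hm : 2 ≤ m) (x : Fin (n + 2))
    (j : Fin (m ^ 2 ^ n + 1)) (w : Fin (m ^ 2 ^ n + 1) → Fin (n + 2))
    (hw : ∀ q, q ≠ j → w q = x) :
    fop n m w = x := by
  rcases Fin.eq_zero_or_eq_succ x with rfl | ⟨i, rfl⟩
  · refine fop_eq_zero (Finset.eq_empty_of_forall_notMem fun r hr => ?_)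
    exact absurd (lt_of_mem_FsetA hm hw hr) (Nat.not_lt_zero r)
  · refine Fin.ext ((fop_val_eq ⟨mem_FsetA_of_succ hm hw, fun r hr => ?_⟩).trans (by simp))
    exact Nat.lt_succ_iff.mp (by simpa using lt_of_mem_FsetA hm hw hr)
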